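/- arXiv:math/0509692 — 3 statements merged into one kernel-verified Lean document; each statement's English description precedes it below -/
import Mathlib

section
/- Let K be a field with char(K) ≠ 2, h, t, h̃, t̃ ∈ K with h² + 4t ≠ 0, (h̃² + 4t̃)/(h² + 4t) = a², a ≠ 0, and b = (h̃ - ah)/2. Then (ax + b)² - h̃(ax + b) - t̃ ≡ 0 in K[x]/(x² - hx - t); equivalently, the substituted element ax + b satisfies the defining relation of A_{h̃,t̃}. -/
/-!
Substituting `x ↦ a x + b` into `y² - h̃ y - t̃` and reducing with `x² = h x + t` leaves
`a (a h + 2 b - h̃) x + (a² t + b² - h̃ b - t̃)`. The choice `2 b = h̃ - a h` kills the linear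
coefficient, and then `4 (a² t + b² - h̃ b - t̃) = a² (h² + 4 t) - (h̃² + 4 t̃)`, which vanishes
because the two discriminants differ by the square factor `a²`.
-/

open Polynomial AdjoinRoot

theorem AdjoinRoot.root_sq_sub_mul_sub {R : Type*} [CommRing R] (h t : R) :
    root (X ^ 2 - C h * X - C t) ^ 2
      - algebraMap R _ h * root (X ^ 2 - C h * X - C t) - algebraMap R _ t = 0 := by
  have := mk_self (f := X ^ 2 - C h * X - C t)
  rwa [map_sub, map_sub, map_mul, map_pow, mk_X, mk_C, mk_C] at this

theorem sq_sub_mul_sub_eq_zero_of_coeffs {R A : Type*} [CommRing R] [CommRing A] [Algebra R A]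
    {r : A} {h t h' t' a b : R}
    (hr : r ^ 2 - algebraMap R A h * r - algebraMap R A t = 0)
    (hlin : a * h + 2 * b - h' = 0) (hconst : a ^ 2 * t + b ^ 2 - h' * b - t' = 0) :
    (algebraMap R A a * r + algebraMap R A b) ^ 2
      - algebraMap R A h' * (algebraMap R A a * r + algebraMap R A b) - algebraMap R A t' = 0 := by
  have hlin' := congrArg (algebraMap R A) hlin
  have hconst' := congrArg (algebraMap R A) hconst
  simp only [map_add, map_sub, map_mul, map_pow, map_ofNat, map_zero] at hlin' hconst'
  linear_combination algebraMap R A a ^ 2 * hr + algebraMap R A a * r * hlin' + hconst'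

theorem const_coeff_eq_zero_of_discrim_eq {K : Type*} [Field K] (h2 : (2 : K) ≠ 0)
    {h t h' t' a : K} (hdisc : h' ^ 2 + 4 * t' = a ^ 2 * (h ^ 2 + 4 * t)) :
    a ^ 2 * t + ((h' - a * h) / 2) ^ 2 - h' * ((h' - a * h) / 2) - t' = 0 := by
  field_simp
  linear_combination -hdisc

theorem stmt_5_general (K : Type*) [Field K] (hchar : ringChar K ≠ 2)
    (h t h' t' a b : K) (hd : h ^ 2 + 4 * t ≠ 0)
    (hsq : (h' ^ 2 + 4 * t') / (h ^ 2 + 4 * t) = a ^ 2)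
    (hb : b = (h' - a * h) / 2) :
    ∀ y : AdjoinRoot (X ^ 2 - C h * X - C t),
      y = algebraMap K (AdjoinRoot (X ^ 2 - C h * X - C t)) a * root (X ^ 2 - C h * X - C t)
            + algebraMap K (AdjoinRoot (X ^ 2 - C h * X - C t)) b →
      y ^ 2 - algebraMap K _ h' * y - algebraMap K _ t' = 0 := by
  rintro y rfl
  have h2 : (2 : K) ≠ 0 := Ring.two_ne_zero hchar
  have hdisc : h' ^ 2 + 4 * t' = a ^ 2 * (h ^ 2 + 4 * t) := (div_eq_iff hd).mp hsq
  subst hb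
  refine sq_sub_mul_sub_eq_zero_of_coeffs (root_sq_sub_mul_sub h t) ?_
    (const_coeff_eq_zero_of_discrim_eq h2 hdisc)
  field_simp
  ring

theorem stmt_5 (K : Type*) [Field K] (hchar : ringChar K ≠ 2)
    (h t h' t' a b : K) (ha : a ≠ 0) (hd : h ^ 2 + 4 * t ≠ 0)
    (hsq : (h' ^ 2 + 4 * t') / (h ^ 2 + 4 * t) = a ^ 2)
    (hb : b = (h' - a * h) / 2) :
    ∀ y : AdjoinRoot (X ^ 2 - C h * X - C t),
      y = algebraMap K (AdjoinRoot (X ^ 2 - C h * X - C t)) a * root (X ^ 2 - C h * X - C t)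
            + algebraMap K (AdjoinRoot (X ^ 2 - C h * X - C t)) b →
      y ^ 2 - algebraMap K _ h' * y - algebraMap K _ t' = 0 :=
  stmt_5_general K hchar h t h' t' a b hd hsq hb
end

section
/- With the Frobenius structure on A_{h,t} as above, Δ is coassociative: (Δ ⊗ id) ∘ Δ = (id ⊗ Δ) ∘ Δ. -/
/-!
Both sides of the identity are `K`-linear in `a`, and `A_{h,t}` is spanned by `1` and `x`, so it
suffices to check it on these two elements. There it follows by expanding `Δ 1` and `Δ x`
into pure tensors; the relation `x² = h x + t` is never needed.
-/

open Polynomial AdjoinRoot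
open scoped TensorProduct

/-- `A_{h,t} = K[x]/(x² - hx - t)`. -/
noncomputable abbrev Aht (K : Type*) [Field K] (h t : K) :=
  AdjoinRoot (X ^ 2 - C h * X - C t)

/-- The canonical generator `x` of `A_{h,t}`. -/
noncomputable abbrev AhtX (K : Type*) [Field K] (h t : K) : Aht K h t :=
  root (X ^ 2 - C h * X - C t)

theorem AdjoinRoot.span_one_root_eq_top {R : Type*} [CommRing R] {g : R[X]} (hg : g.Monic)
    (hdeg : g.natDegree = 2) : Submodule.span R {1, root g} = ⊤ := by
  rw [eq_top_iff, ← (powerBasis' hg).basis.span_eq, Submodule.span_le]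
  rintro _ ⟨⟨i, hi⟩, rfl⟩
  rw [PowerBasis.basis_eq_pow, powerBasis'_gen]
  replace hi : i < 2 := hdeg ▸ hi
  interval_cases i <;> apply Submodule.subset_span <;> simp

theorem Aht.span_one_x_eq_top (K : Type*) [Field K] (h t : K) :
    Submodule.span K {1, AhtX K h t} = ⊤ :=
  span_one_root_eq_top (by monicity!) (by compute_degree!)

theorem coassoc_eqOn_pair {R M : Type*} [CommRing R] [AddCommGroup M] [Module R M]
    {Δ : M →ₗ[R] M ⊗[R] M} {e x : M} {h t : R}
    (he : Δ e = e ⊗ₜ x + x ⊗ₜ e - h • (e ⊗ₜ e)) (hx : Δ x = x ⊗ₜ x + t • (e ⊗ₜ e)) :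
    Set.EqOn ((TensorProduct.assoc R M M M).toLinearMap ∘ₗ TensorProduct.map Δ LinearMap.id ∘ₗ Δ)
      (TensorProduct.map LinearMap.id Δ ∘ₗ Δ) {e, x} := by
  rintro a (rfl | rfl) <;>
    simp only [LinearMap.comp_apply, LinearEquiv.coe_coe, he, hx, map_add, map_sub, map_smul,
      TensorProduct.map_tmul, LinearMap.id_apply, TensorProduct.assoc_tmul,
      TensorProduct.add_tmul, TensorProduct.sub_tmul, TensorProduct.smul_tmul,
      TensorProduct.tmul_add, TensorProduct.tmul_sub, TensorProduct.tmul_smul] <;>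
    module

/-- Coassociativity of `Δ`: `(Δ ⊗ id) ∘ Δ = (id ⊗ Δ) ∘ Δ` (after reassociating). -/
theorem stmt_8 (K : Type*) [Field K] (h t : K)
    (Δ : Aht K h t →ₗ[K] Aht K h t ⊗[K] Aht K h t)
    (hΔ1 : Δ 1 = 1 ⊗ₜ[K] AhtX K h t + AhtX K h t ⊗ₜ[K] 1 - h • (1 ⊗ₜ[K] 1))
    (hΔx : Δ (AhtX K h t) = AhtX K h t ⊗ₜ[K] AhtX K h t + t • (1 ⊗ₜ[K] 1)) :
    ∀ a, TensorProduct.assoc K (Aht K h t) (Aht K h t) (Aht K h t)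
          (TensorProduct.map Δ LinearMap.id (Δ a))
        = TensorProduct.map LinearMap.id Δ (Δ a) :=
  LinearMap.congr_fun <|
    LinearMap.ext_on (Aht.span_one_x_eq_top K h t) (coassoc_eqOn_pair hΔ1 hΔx)
end

section
/- Let h, t ∈ ℤ with h² + 4t = γ² for nonzero γ ∈ ℤ. Then the ℤ-algebra ℤ[x]/(x² - hx - t) is isomorphic as a ring to the subring {(a, b) ∈ ℤ × ℤ : a ≡ b mod γ} of ℤ × ℤ, via x ↦ ((h+γ)/2, (h-γ)/2) when h and γ have the same parity. -/
/-!
With `a, b = (h ± γ)/2` we have `x² - hx - t = (x - a)(x - b)`. Over any commutative ring,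
evaluation at both roots maps `R[x]/((x - a)(x - b))` to `R × R`; it is injective as soon as
`a - b` is a non-zero-divisor (a kernel element is divisible by `x - b`, and then the cofactor
by `x - a`), and its image is the set of pairs congruent modulo `a - b`, since
`a - b ∣ p(a) - p(b)` and conversely every such pair is the value of a linear polynomial.
Here `a - b = γ`.
-/

open Polynomial AdjoinRoot

namespace AdjoinRoot

variable {R : Type*} [CommRing R] (a b : R)

noncomputable def evalRoots : AdjoinRoot ((X - C a) * (X - C b)) →ₐ[R] R × R :=
  liftAlgHom _ (Algebra.ofId R (R × R)) (a, b) <| by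
    change aeval (a, b) _ = 0
    simp [aeval_prod_apply]

theorem evalRoots_mk (p : R[X]) : evalRoots a b (mk _ p) = (p.eval a, p.eval b) := by
  change aeval (a, b) p = _
  simp [aeval_prod_apply]

theorem evalRoots_root : evalRoots a b (root _) = (a, b) :=
  liftAlgHom_root _ _ _ _

variable {a b}

theorem evalRoots_injective (hab : a - b ∈ nonZeroDivisors R) :
    Function.Injective (evalRoots a b) := by
  rw [injective_iff_map_eq_zero]
  intro z hz
  obtain ⟨p, rfl⟩ := mk_surjective z
  rw [evalRoots_mk, Prod.mk_eq_zero] at hz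
  obtain ⟨q, rfl⟩ := dvd_iff_isRoot.mpr hz.2
  have hq : q.IsRoot a := by
    simpa only [IsRoot.def, eval_mul, eval_sub, eval_X, eval_C,
      mul_left_mem_nonZeroDivisors_eq_zero_iff hab] using hz.1
  obtain ⟨r, rfl⟩ := dvd_iff_isRoot.mpr hq
  exact mk_eq_zero.mpr ⟨r, by ring⟩

theorem range_evalRoots : Set.range (evalRoots a b) = {p : R × R | a - b ∣ p.1 - p.2} := by
  ext ⟨u, v⟩
  constructor
  · rintro ⟨z, hz⟩
    obtain ⟨p, rfl⟩ := mk_surjective z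
    rw [evalRoots_mk, Prod.mk.injEq] at hz
    rw [← hz.1, ← hz.2]
    exact sub_dvd_eval_sub a b p
  · rintro ⟨d, hd : u - v = (a - b) * d⟩
    refine ⟨mk _ (C d * X + C (u - d * a)), ?_⟩
    rw [evalRoots_mk]
    simp only [eval_add, eval_mul, eval_C, eval_X, Prod.mk.injEq]
    constructor
    · ring
    · linear_combination hd

end AdjoinRoot

/-- `ℤ[x]/(x² - hx - t)` embeds in `ℤ × ℤ` via the two roots, with image the
pairs congruent mod `γ`. -/
theorem stmt_18 (h t γ : ℤ) (hγ : γ ≠ 0) (hd : h ^ 2 + 4 * t = γ ^ 2)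
    (hpar : h % 2 = γ % 2) :
    ∃ e : AdjoinRoot (X ^ 2 - C h * X - C t : ℤ[X]) →+* ℤ × ℤ,
      Function.Injective e ∧
      e (root (X ^ 2 - C h * X - C t : ℤ[X])) = ((h + γ) / 2, (h - γ) / 2) ∧
      Set.range e = {p : ℤ × ℤ | p.1 ≡ p.2 [ZMOD γ]} := by
  set a := (h + γ) / 2
  set b := (h - γ) / 2
  have ha : 2 * a = h + γ := by omega
  have hb : 2 * b = h - γ := by omega
  have hab : a - b = γ := by omega
  have hfactor : X ^ 2 - C h * X - C t = (X - C a) * (X - C b) := by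
    have hsum : h = a + b := by omega
    have hprod : t = -(a * b) := by
      have : 4 * (t + a * b) = 0 := by linear_combination hd + 2 * b * ha + (h + γ) * hb
      omega
    rw [hsum, hprod, C_add, C_neg, C_mul]
    ring
  rw [hfactor]
  refine ⟨evalRoots a b, evalRoots_injective (mem_nonZeroDivisors_of_ne_zero (hab ▸ hγ)),
    evalRoots_root a b, ?_⟩
  rw [AlgHom.coe_toRingHom, range_evalRoots, hab]
  ext p
  exact (Int.modEq_comm.trans Int.modEq_iff_dvd).symm
end
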